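/- arXiv:2509.02889 — 9 statements merged into one kernel-verified Lean document; each statement's English description precedes it below -/
import Mathlib

section
/- Let K be a field with a Hausdorff field topology τ, and let I be a set of derivations K → K. Equip K × K^I with the product topology induced by τ and let σ_I : K → K × K^I be given by σ_I(a) = (a, (d(a))_{d ∈ I}). Then the topology τ_I induced on K by σ_I (i.e., the coarsest topology making σ_I continuous) is a field topology: addition, negation, multiplication are continuous, and multiplicative inverse is continuous on K \ {0}. -/
open TopologicalSpace Polynomial

variable {K : Type*}

/-- The topology on `K` induced by the embedding `a ↦ (a, (d a)_{d ∈ I})` into `K × K^I`,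
where `K × K^I` carries the product topology induced by `τ`. -/
def derTop [Field K] (τ : TopologicalSpace K) (I : Set (Derivation ℤ K K)) :
    TopologicalSpace K :=
  @TopologicalSpace.induced K (K × (I → K)) (fun a => (a, fun d => d.1 a))
    (@instTopologicalSpaceProd K (I → K) τ (@Pi.topologicalSpace I (fun _ => K) fun _ => τ))

/-- `τ` is a (Hausdorff) field topology on `K`. -/
def IsFieldTopology [Field K] (τ : TopologicalSpace K) : Prop :=
  @T2Space K τ ∧ @IsTopologicalRing K τ _ ∧
    @ContinuousOn K K τ τ (fun x => x⁻¹) {0}ᶜ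

/-!
The map `σ_I : a ↦ (a, (d a)_{d ∈ I})` is a ring homomorphism into the trivial square-zero
extension `K ⊕ K^I`: the Leibniz rule is exactly multiplicativity there. That extension is a
topological ring, and a topology induced by a ring homomorphism into a topological ring is a ring
topology. For inversion, `d (a⁻¹) = -a⁻² d a` says `σ_I (a⁻¹) = (σ_I a)⁻¹`, and the inversion
`(a, m) ↦ (a⁻¹, -a⁻² m)` of the extension is continuous wherever `a ↦ a⁻¹` is.
-/

open TrivSqZeroExt

theorem isTopologicalRing_induced {R S F : Type*} [Ring R] [Ring S] [TopologicalSpace S]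
    [IsTopologicalRing S] [FunLike F R S] [RingHomClass F R S] (f : F) :
    @IsTopologicalRing R (induced f ‹_›) _ :=
  letI := induced f ‹_›
  have := topologicalAddGroup_induced f
  have := continuousMul_induced f
  { }

theorem TrivSqZeroExt.continuousOn_inv {R M : Type*} [TopologicalSpace R] [TopologicalSpace M]
    [Inv R] [Neg M] [SMul R M] [SMul Rᵐᵒᵖ M] [ContinuousNeg M] [ContinuousSMul R M]
    [ContinuousSMul Rᵐᵒᵖ M] {s : Set R} (h : ContinuousOn (·⁻¹) s) :
    ContinuousOn (·⁻¹ : TrivSqZeroExt R M → _) (fst ⁻¹' s) := by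
  have hfst : ContinuousOn (fun x : TrivSqZeroExt R M => (fst x)⁻¹) (fst ⁻¹' s) :=
    h.comp continuous_fst.continuousOn fun _ hx => hx
  exact hfst.prodMk (((MulOpposite.continuous_op.comp_continuousOn hfst).smul
    (hfst.smul continuous_snd.continuousOn)).neg)

namespace Derivation

variable {R A M : Type*} [CommSemiring R] [CommSemiring A] [Algebra R A] [AddCommMonoid M]
  [Module A M] [Module R M]

def pi {ι : Type*} (D : ι → Derivation R A M) : Derivation R A (ι → M) where
  toLinearMap := LinearMap.pi fun i => (D i).toLinearMap
  map_one_eq_zero' := funext fun i => (D i).map_one_eq_zero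
  leibniz' a b := funext fun i => (D i).leibniz a b

variable [Module Aᵐᵒᵖ M] [IsCentralScalar A M]

def toTrivSqZeroExt (D : Derivation R A M) : A →+* TrivSqZeroExt A M where
  toFun a := (a, D a)
  map_one' := TrivSqZeroExt.ext rfl D.map_one_eq_zero
  map_mul' a b := TrivSqZeroExt.ext rfl <|
    (D.leibniz a b).trans <| congrArg _ (op_smul_eq_smul b (D a)).symm
  map_zero' := TrivSqZeroExt.ext rfl D.map_zero
  map_add' a b := TrivSqZeroExt.ext rfl (D.map_add a b)

@[simp] theorem fst_toTrivSqZeroExt (D : Derivation R A M) (a : A) :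
    (D.toTrivSqZeroExt a).fst = a := rfl

@[simp] theorem snd_toTrivSqZeroExt (D : Derivation R A M) (a : A) :
    (D.toTrivSqZeroExt a).snd = D a := rfl

end Derivation

theorem Derivation.toTrivSqZeroExt_inv {R M : Type*} [CommRing R] [Field K] [Algebra R K]
    [AddCommGroup M] [Module K M] [Module R M] [Module Kᵐᵒᵖ M] [IsCentralScalar K M]
    (D : Derivation R K M) (a : K) :
    D.toTrivSqZeroExt a⁻¹ = (D.toTrivSqZeroExt a)⁻¹ :=
  TrivSqZeroExt.ext rfl <| by
    simp only [snd_inv, fst_toTrivSqZeroExt, snd_toTrivSqZeroExt, leibniz_inv, op_smul_eq_smul,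
      smul_smul, sq, neg_smul]

theorem continuousOn_inv_induced {R S : Type*} [Inv R] [Inv S] [TopologicalSpace S] {f : R → S}
    (hf : ∀ a, f a⁻¹ = (f a)⁻¹) {s : Set R} {t : Set S} (hst : Set.MapsTo f s t)
    (h : ContinuousOn (·⁻¹) t) :
    @ContinuousOn R R (induced f ‹_›) (induced f ‹_›) (·⁻¹) s := by
  let _ := induced f ‹_›
  rw [(Topology.IsInducing.induced f).continuousOn_iff, Function.comp_def]
  simp_rw [hf]
  exact h.comp (Topology.IsInducing.induced f).continuous.continuousOn hst

theorem stmt0 [Field K] (τ : TopologicalSpace K) (hτ : IsFieldTopology τ)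
    (I : Set (Derivation ℤ K K)) :
    @IsTopologicalRing K (derTop τ I) _ ∧
      @ContinuousOn K K (derTop τ I) (derTop τ I) (fun x => x⁻¹) {0}ᶜ := by
  let _ := τ
  obtain ⟨-, hring, hinv⟩ := hτ
  let D := Derivation.pi fun d : I => d.1
  have hringσ := isTopologicalRing_induced D.toTrivSqZeroExt
  have hinvσ := continuousOn_inv_induced D.toTrivSqZeroExt_inv (fun _ ha => ha)
    (TrivSqZeroExt.continuousOn_inv hinv)
  exact ⟨hringσ, hinvσ⟩
end

section
/- With K, τ, I as above, τ_I is discrete if and only if there exist a τ-neighborhood U of 0 and finitely many derivations d₁, …, dₙ ∈ I such that U ∩ d₁⁻¹(U) ∩ ⋯ ∩ dₙ⁻¹(U) = {0}. -/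
/-!
Since `d 0 = 0`, the sets `{a | a ∈ U ∧ ∀ d ∈ s, d a ∈ U}` for `τ`-neighbourhoods `U` of `0` and
finite `s ⊆ I` form a neighbourhood basis of `0` for `τ_I`; so the condition says exactly that `{0}`
is `τ_I`-open. As `τ_I` is induced by the additive map `a ↦ (a, (d a)_{d ∈ I})`, it is a group
topology, and a group topology in which `{0}` is open is discrete.
-/

open TopologicalSpace Polynomial

variable {K : Type*}

open Filter Topology

theorem hasBasis_nhds_prod_pi_const {X ι : Type*} [TopologicalSpace X] (x : X) :
    (𝓝 (x, fun _ : ι => x)).HasBasis (fun p : Set X × Set ι => p.1 ∈ 𝓝 x ∧ p.2.Finite)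
      (fun p => p.1 ×ˢ p.2.pi fun _ => p.1) := by
  rw [nhds_prod_eq, nhds_pi]
  refine ((𝓝 x).basis_sets.prod (𝓝 x).basis_sets.pi_self).to_hasBasis ?_ ?_
  · rintro ⟨U, J, V⟩ ⟨hU, hJ, hV⟩
    exact ⟨(U ∩ V, J), ⟨inter_mem hU hV, hJ⟩,
      Set.prod_mono Set.inter_subset_left (Set.pi_mono fun _ _ => Set.inter_subset_right)⟩
  · rintro ⟨U, J⟩ ⟨hU, hJ⟩
    exact ⟨(U, J, U), ⟨hU, hJ, hU⟩, subset_rfl⟩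

def derivationEmbedding {R : Type*} [CommRing R] (I : Set (Derivation ℤ R R)) :
    R →+ R × (I → R) where
  toFun a := (a, fun d => d.1 a)
  map_zero' := by ext <;> simp
  map_add' a b := by ext <;> simp

section

variable [Field K] (τ : TopologicalSpace K) (I : Set (Derivation ℤ K K))

theorem isTopologicalAddGroup_derTop (h : @IsTopologicalAddGroup K τ _) :
    @IsTopologicalAddGroup K (derTop τ I) _ :=
  let _ := τ
  topologicalAddGroup_induced (derivationEmbedding I)

theorem derTop_eq_bot_iff_isOpen_singleton_zero (h : @IsTopologicalAddGroup K τ _) :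
    derTop τ I = ⊥ ↔ @IsOpen K (derTop τ I) {0} := by
  let _ := derTop τ I
  have := isTopologicalAddGroup_derTop τ I h
  rw [← discreteTopology_iff_isOpen_singleton_zero]
  exact ⟨fun hbot => ⟨hbot⟩, fun hdisc => hdisc.eq_bot⟩

theorem hasBasis_nhds_zero_derTop :
    (@nhds K (derTop τ I) 0).HasBasis
      (fun p : Set K × Finset (Derivation ℤ K K) => p.1 ∈ @nhds K τ 0 ∧ ↑p.2 ⊆ I)
      (fun p => {a | a ∈ p.1 ∧ ∀ d ∈ p.2, d a ∈ p.1}) := by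
  let _ := τ
  rw [derTop, nhds_induced]
  simp only [map_zero]
  refine ((hasBasis_nhds_prod_pi_const (ι := I) (0 : K)).comap _).to_hasBasis ?_ ?_
  · rintro ⟨U, J⟩ ⟨hU, hJ⟩
    refine ⟨(U, hJ.toFinset.map (Function.Embedding.subtype _)), ⟨hU, by simp⟩, ?_⟩
    rintro a ⟨haU, hd⟩
    exact ⟨haU, fun d hdJ => hd d (by simpa using hdJ)⟩
  · rintro ⟨U, s⟩ ⟨hU, hs⟩
    refine ⟨(U, Subtype.val ⁻¹' (s : Set (Derivation ℤ K K))),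
      ⟨hU, s.finite_toSet.preimage Subtype.val_injective.injOn⟩, ?_⟩
    rintro a ⟨haU, hd⟩
    exact ⟨haU, fun d hds => hd ⟨d, hs hds⟩ hds⟩

theorem isOpen_singleton_zero_derTop_iff :
    @IsOpen K (derTop τ I) {0} ↔ ∃ U ∈ @nhds K τ 0, ∃ s : Finset (Derivation ℤ K K), ↑s ⊆ I ∧
        {a : K | a ∈ U ∧ ∀ d ∈ s, d a ∈ U} = {0} := by
  rw [@isOpen_singleton_iff_nhds_eq_pure K (derTop τ I), le_antisymm_iff,
    and_iff_left (@pure_le_nhds K (derTop τ I) 0), le_pure_iff,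
    (hasBasis_nhds_zero_derTop τ I).mem_iff]
  simp only [Prod.exists, and_assoc, exists_and_left]
  refine exists_congr fun U => and_congr_right fun hU => exists_congr fun s =>
    and_congr_right fun _ => Set.Nonempty.subset_singleton_iff ⟨0, ?_⟩
  have h0U : (0 : K) ∈ U := @mem_of_mem_nhds K τ 0 U hU
  exact ⟨h0U, fun d _ => by simpa using h0U⟩

end

theorem stmt2 [Field K] (τ : TopologicalSpace K) (hτ : IsFieldTopology τ)
    (I : Set (Derivation ℤ K K)) :
    derTop τ I = ⊥ ↔
      ∃ U ∈ @nhds K τ 0, ∃ s : Finset (Derivation ℤ K K), ↑s ⊆ I ∧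
        {a : K | a ∈ U ∧ ∀ d ∈ s, d a ∈ U} = {0} := by
  have := @IsTopologicalRing.to_topologicalAddGroup K _ τ hτ.2.1
  rw [derTop_eq_bot_iff_isOpen_singleton_zero τ I this, isOpen_singleton_zero_derTop_iff]
end

section
/- Let K be a field with a Hausdorff field topology τ and let d : K → K be a derivation. If τ is locally bounded and the topology τ_d (induced by a ↦ (a, d(a)) into K × K with the product τ-topology) is not discrete, then τ_d is locally bounded. -/
open TopologicalSpace Polynomial

variable {K : Type*}

/-- `s` is a bounded subset of `K` with respect to the field topology `τ`. -/
def IsBddSet [Field K] (τ : TopologicalSpace K) (s : Set K) : Prop :=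
  ∀ U ∈ @nhds K τ 0, ∃ l : K, l ≠ 0 ∧ ∀ x ∈ s, l * x ∈ U

/-- `τ` is locally bounded: some nonempty open set is bounded. -/
def IsLocallyBoundedTop [Field K] (τ : TopologicalSpace K) : Prop :=
  ∃ U : Set K, @IsOpen K τ U ∧ U.Nonempty ∧ IsBddSet τ U

/-! If `B` is a bounded open neighbourhood of `0` for `τ`, then `B ∩ d⁻¹ B` is a `τ_d`-open
neighbourhood of `0`, and it is `τ_d`-bounded. Given a basic neighbourhood `V ∩ d⁻¹ W` of `0`,
non-discreteness of `τ_d` provides `l ≠ 0` with `l` and `d l` so close to `0` that `l B ⊆ V` and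
both `l B` and `(d l) B` lie in a half of `W`; for `a ∈ B ∩ d⁻¹ B` the Leibniz rule
`d (l a) = l d a + (d l) a` then puts `d (l a)` in `W`. -/

open Filter Topology

lemma derTop_singleton [Field K] (τ : TopologicalSpace K) (d : Derivation ℤ K K) :
    derTop τ {d} = τ ⊓ τ.induced d := by
  simp only [derTop, instTopologicalSpaceProd, Pi.topologicalSpace, induced_inf, induced_iInf,
    induced_compose]
  congr 1
  · exact induced_id
  · let : Unique ({d} : Set (Derivation ℤ K K)) := Set.uniqueSingleton d
    rw [iInf_unique]
    rfl

lemma exists_ne_zero_mem_of_not_discreteTopology {G : Type*} [AddGroup G] [TopologicalSpace G]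
    [IsTopologicalAddGroup G] (hG : ¬DiscreteTopology G) {N : Set G} (hN : N ∈ 𝓝 0) :
    ∃ x ∈ N, x ≠ 0 := by
  by_contra! h
  have hzero : {0} ∈ 𝓝 (0 : G) := mem_of_superset hN h
  exact hG <| discreteTopology_of_isOpen_singleton_zero <|
    (isOpen_singleton_iff_nhds_eq_pure 0).2 (le_antisymm (le_pure_iff.2 hzero) (pure_le_nhds 0))

section Bounded

variable [Field K] [t : TopologicalSpace K]

lemma IsBddSet.preimage_add_of_mem [IsTopologicalAddGroup K] {s : Set K} {a : K} (ha : a ∈ s)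
    (hs : IsBddSet t s) : IsBddSet t ((· + a) ⁻¹' s) := by
  intro W hW
  obtain ⟨V, hV, hVW⟩ := exists_nhds_zero_half hW
  obtain ⟨l, hl, hls⟩ := hs (V ∩ Neg.neg ⁻¹' V) (inter_mem hV (neg_mem_nhds_zero K hV))
  refine ⟨l, hl, fun x hx => ?_⟩
  rw [show l * x = l * (x + a) + -(l * a) by ring]
  exact hVW _ (hls _ hx).1 _ (hls a ha).2

lemma IsLocallyBoundedTop.exists_isOpen_zero_mem_isBddSet [IsTopologicalAddGroup K]
    (h : IsLocallyBoundedTop t) : ∃ B : Set K, IsOpen B ∧ (0 : K) ∈ B ∧ IsBddSet t B := by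
  obtain ⟨U, hU, ⟨a, ha⟩, hUb⟩ := h
  exact ⟨(· + a) ⁻¹' U, hU.preimage (continuous_add_const a), by simpa using ha,
    hUb.preimage_add_of_mem ha⟩

lemma IsBddSet.exists_mem_nhds_zero_mul_mem [ContinuousMul K] {B W : Set K} (hB : IsBddSet t B)
    (hW : W ∈ 𝓝 0) : ∃ P ∈ 𝓝 (0 : K), ∀ c ∈ P, ∀ x ∈ B, c * x ∈ W := by
  have hmul : (fun p : K × K => p.1 * p.2) ⁻¹' W ∈ 𝓝 ((0, 0) : K × K) :=
    tendsto_mul (by simpa only [mul_zero] using hW)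
  obtain ⟨V, hVo, hV0, hVW⟩ := exists_nhds_square hmul
  obtain ⟨l, hl, hlB⟩ := hB V (hVo.mem_nhds hV0)
  refine ⟨(l⁻¹ * ·) ⁻¹' V, (continuous_const_mul l⁻¹).tendsto' 0 0 (mul_zero _) (hVo.mem_nhds hV0),
    fun c hc x hx => ?_⟩
  rw [show c * x = l⁻¹ * c * (l * x) by field_simp]
  exact hVW (Set.mk_mem_prod hc (hlB x hx))

end Bounded

section DerivationTopology

variable [Field K] [t : TopologicalSpace K] [IsTopologicalRing K] (d : Derivation ℤ K K)

lemma exists_ne_zero_mem_derivation (hd : ¬@DiscreteTopology K (t ⊓ t.induced d)) {P Q : Set K}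
    (hP : P ∈ 𝓝 0) (hQ : Q ∈ 𝓝 0) : ∃ l ∈ P, d l ∈ Q ∧ l ≠ 0 := by
  have hgroup : @IsTopologicalAddGroup K (t ⊓ t.induced d) _ :=
    topologicalAddGroup_inf inferInstance (topologicalAddGroup_induced (d : K →+ K))
  have hPQ : P ∩ d ⁻¹' Q ∈ @nhds K (t ⊓ t.induced d) 0 := by
    rw [nhds_inf, nhds_induced, map_zero]
    exact inter_mem_inf hP (preimage_mem_comap hQ)
  obtain ⟨l, ⟨hlP, hlQ⟩, hl⟩ :=
    @exists_ne_zero_mem_of_not_discreteTopology K _ (t ⊓ t.induced d) hgroup hd _ hPQ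
  exact ⟨l, hlP, hlQ, hl⟩

theorem IsBddSet.inter_preimage_derivation (hd : ¬@DiscreteTopology K (t ⊓ t.induced d))
    {B : Set K} (hB : IsBddSet t B) : IsBddSet (t ⊓ t.induced d) (B ∩ d ⁻¹' B) := by
  intro N hN
  rw [nhds_inf, nhds_induced, map_zero, mem_inf_iff] at hN
  obtain ⟨V, hV, T, ⟨W, hW, hWT⟩, rfl⟩ := hN
  obtain ⟨W', hW', hW'W⟩ := exists_nhds_zero_half hW
  obtain ⟨P, hP, hPB⟩ := hB.exists_mem_nhds_zero_mul_mem (inter_mem hV hW')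
  obtain ⟨Q, hQ, hQB⟩ := hB.exists_mem_nhds_zero_mul_mem hW'
  obtain ⟨l, hlP, hlQ, hl⟩ := exists_ne_zero_mem_derivation d hd hP hQ
  refine ⟨l, hl, fun a ⟨ha, hda⟩ => ⟨(hPB l hlP a ha).1, hWT ?_⟩⟩
  simp only [Set.mem_preimage, Derivation.leibniz, smul_eq_mul, mul_comm a]
  exact hW'W _ (hPB l hlP _ hda).2 _ (hQB _ hlQ a ha)

end DerivationTopology

theorem stmt3 [Field K] (τ : TopologicalSpace K) (hτ : IsFieldTopology τ)
    (hlb : IsLocallyBoundedTop τ) (d : Derivation ℤ K K)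
    (hnd : derTop τ {d} ≠ ⊥) :
    IsLocallyBoundedTop (derTop τ {d}) := by
  have : @IsTopologicalRing K τ _ := hτ.2.1
  obtain ⟨B, hBo, hB0, hB⟩ := hlb.exists_isOpen_zero_mem_isBddSet
  rw [derTop_singleton] at hnd ⊢
  refine ⟨B ∩ d ⁻¹' B, ?_, ⟨0, hB0, by simpa using hB0⟩,
    IsBddSet.inter_preimage_derivation d (fun h => hnd h.eq_bot) hB⟩
  exact @IsOpen.inter K (τ ⊓ τ.induced d) _ _ (hBo.mono inf_le_left)
    ((isOpen_induced hBo).mono inf_le_right)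
end

section
/- Let K be a characteristic zero field with a gt-henselian field topology τ, and let I be a set of derivations K → K such that the topology τ_I is not discrete. Then τ_I is gt-henselian. -/
open TopologicalSpace Polynomial

variable {K : Type*}

/-- `τ` is a gt-henselian topology on `K`. -/
def IsGtHenselian [Field K] (τ : TopologicalSpace K) : Prop :=
  IsFieldTopology τ ∧ τ ≠ ⊥ ∧
    ∀ U ∈ @nhds K τ (-1), ∀ d : ℕ, ∃ V ∈ @nhds K τ 0,
      ∀ a : Fin (d + 1) → K, (∀ i, a i ∈ V) →
        ∃ β ∈ U,
          (X ^ (d + 2) + X ^ (d + 1) + ∑ i : Fin (d + 1), C (a i) * X ^ (i : ℕ)).eval β = 0 ∧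
          (Polynomial.derivative
            (X ^ (d + 2) + X ^ (d + 1) + ∑ i : Fin (d + 1), C (a i) * X ^ (i : ℕ))).eval β ≠ 0


/-!
The topology `τ_I` is the coarsest one finer than `τ` for which every `δ ∈ I` is continuous, so a
filter converges in `τ_I` iff it converges in `τ` and so do its images under each `δ ∈ I`; with the
Leibniz rule this makes `τ_I` a field topology. For the henselian condition, differentiating
`f_a(β) = 0` at a simple root `β` of `f_a = X^(d+2) + X^(d+1) + ∑ aᵢ Xⁱ` gives
`δ β = -(∑ δ(aᵢ) βⁱ) / f_a'(β)`. As `a → 0` in `τ_I`, the simple roots supplied by `τ` can be taken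
near `-1`, the `δ(aᵢ)` tend to `0` and `f_a'(β)` tends to `f_0'(-1) = -(-1)^d ≠ 0`, so `δ β` tends
to `0 = δ(-1)`: these roots are also `τ_I`-close to `-1`.
-/

open Filter Topology

theorem eventually_pi_self_iff {ι α : Type*} [Finite ι] {f : Filter α} {p : (ι → α) → Prop} :
    (∀ᶠ a in Filter.pi fun _ : ι => f, p a) ↔ ∃ V ∈ f, ∀ a : ι → α, (∀ i, a i ∈ V) → p a := by
  rw [f.basis_sets.pi_self.eventually_iff]
  constructor
  · rintro ⟨⟨s, V⟩, ⟨-, hV⟩, hp⟩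
    exact ⟨V, hV, fun a ha => hp fun i _ => ha i⟩
  · rintro ⟨V, hV, hp⟩
    exact ⟨⟨Set.univ, V⟩, ⟨Set.finite_univ, hV⟩, fun a ha => hp a fun i => ha i trivial⟩

theorem continuous_iff_tendsto_nhds_prod {X Y Z : Type*} [TopologicalSpace X] [TopologicalSpace Y]
    [TopologicalSpace Z] {g : X × Y → Z} :
    Continuous g ↔ ∀ x y, Tendsto g (𝓝 x ×ˢ 𝓝 y) (𝓝 (g (x, y))) := by
  simp only [continuous_iff_continuousAt, ContinuousAt, nhds_prod_eq, Prod.forall]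

section DerTop

variable [Field K] {τ : TopologicalSpace K} {I : Set (Derivation ℤ K K)}

theorem tendsto_nhds_derTop_iff {α : Type*} {l : Filter α} {f : α → K} {x : K} :
    Tendsto f l (@nhds K (derTop τ I) x) ↔
      Tendsto f l (@nhds K τ x) ∧ ∀ δ : I, Tendsto (fun a => δ.1 (f a)) l (@nhds K τ (δ.1 x)) := by
  let _ := τ
  rw [derTop, nhds_induced, tendsto_comap_iff, nhds_prod_eq, tendsto_prod_iff', tendsto_pi_nhds]
  rfl

theorem nhds_derTop_le (x : K) : @nhds K (derTop τ I) x ≤ @nhds K τ x :=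
  (tendsto_nhds_derTop_iff.1 tendsto_id).1

theorem tendsto_derivation_nhds_derTop (δ : I) (x : K) :
    Tendsto δ.1 (@nhds K (derTop τ I) x) (@nhds K τ (δ.1 x)) :=
  (tendsto_nhds_derTop_iff.1 tendsto_id).2 δ

theorem derTop_le : derTop τ I ≤ τ :=
  le_of_nhds_le_nhds nhds_derTop_le

variable (I)

theorem isTopologicalRing_derTop (h : @IsTopologicalRing K τ _) :
    @IsTopologicalRing K (derTop τ I) _ := by
  let _ := τ
  have fst (x y : K) :
      Tendsto Prod.fst (@nhds K (derTop τ I) x ×ˢ @nhds K (derTop τ I) y) (𝓝 x) :=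
    tendsto_fst.mono_right (nhds_derTop_le x)
  have snd (x y : K) :
      Tendsto Prod.snd (@nhds K (derTop τ I) x ×ˢ @nhds K (derTop τ I) y) (𝓝 y) :=
    tendsto_snd.mono_right (nhds_derTop_le y)
  have dfst (δ : I) (x y : K) : Tendsto (fun p : K × K => δ.1 p.1)
      (@nhds K (derTop τ I) x ×ˢ @nhds K (derTop τ I) y) (𝓝 (δ.1 x)) :=
    (tendsto_derivation_nhds_derTop δ x).comp tendsto_fst
  have dsnd (δ : I) (x y : K) : Tendsto (fun p : K × K => δ.1 p.2)
      (@nhds K (derTop τ I) x ×ˢ @nhds K (derTop τ I) y) (𝓝 (δ.1 y)) :=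
    (tendsto_derivation_nhds_derTop δ y).comp tendsto_snd
  have hprod := @continuous_iff_tendsto_nhds_prod K K K (derTop τ I) (derTop τ I) (derTop τ I)
  have hadd := hprod.2 fun x y =>
    tendsto_nhds_derTop_iff.2 ⟨(fst x y).add (snd x y), fun δ => by
      simpa only [map_add] using (dfst δ x y).add (dsnd δ x y)⟩
  have hmul := hprod.2 fun x y =>
    tendsto_nhds_derTop_iff.2 ⟨(fst x y).mul (snd x y), fun δ => by
      simpa only [Derivation.leibniz, smul_eq_mul] using
        ((fst x y).mul (dsnd δ x y)).add ((snd x y).mul (dfst δ x y))⟩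
  have hneg : @Continuous K K (derTop τ I) (derTop τ I) (fun x => -x) :=
    @continuous_iff_continuousAt K K (derTop τ I) (derTop τ I) _ |>.2 fun x =>
    tendsto_nhds_derTop_iff.2 ⟨(tendsto_id.mono_right (nhds_derTop_le x)).neg, fun δ => by
      simpa only [map_neg] using (tendsto_derivation_nhds_derTop δ x).neg⟩
  exact @IsTopologicalRing.mk K (derTop τ I) _
    (@IsTopologicalSemiring.mk K (derTop τ I) _ (@ContinuousAdd.mk K (derTop τ I) _ hadd)
      (@ContinuousMul.mk K (derTop τ I) _ hmul))
    (@ContinuousNeg.mk K (derTop τ I) _ hneg)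

theorem IsFieldTopology.derTop (h : IsFieldTopology τ) : IsFieldTopology (derTop τ I) := by
  obtain ⟨ht2, hring, hinv⟩ := h
  let _ := τ
  refine ⟨t2Space_antitone derTop_le ht2, isTopologicalRing_derTop I hring, fun x hx => ?_⟩
  have hle : @nhdsWithin K (_root_.derTop τ I) x {0}ᶜ ≤ 𝓝[{0}ᶜ] x :=
    inf_le_inf_right _ (nhds_derTop_le x)
  have hinvx := (hinv x hx).mono_left hle
  refine tendsto_nhds_derTop_iff.2 ⟨hinvx, fun δ => ?_⟩
  simpa only [Derivation.leibniz_inv, smul_eq_mul] using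
    ((hinvx.pow 2).neg.mul ((tendsto_derivation_nhds_derTop δ x).mono_left inf_le_left))

end DerTop

section HenselPoly

variable [Field K] {d : ℕ}

noncomputable def henselPoly (a : Fin (d + 1) → K) : K[X] :=
  X ^ (d + 2) + X ^ (d + 1) + ∑ i : Fin (d + 1), C (a i) * X ^ (i : ℕ)

theorem eval_derivative_henselPoly (a : Fin (d + 1) → K) (x : K) :
    (derivative (henselPoly a)).eval x =
      (d + 2) * x ^ (d + 1) + (d + 1) * x ^ d + ∑ i : Fin (d + 1), a i * (i * x ^ ((i : ℕ) - 1)) := by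
  simp [henselPoly, eval_finsetSum, derivative_X_pow, add_assoc, one_add_one_eq_two]

theorem eval_derivative_henselPoly_zero :
    (derivative (henselPoly (0 : Fin (d + 1) → K))).eval (-1) = -(-1) ^ d := by
  rw [eval_derivative_henselPoly]
  simp only [Pi.zero_apply, zero_mul, Finset.sum_const_zero, add_zero]
  ring

theorem Derivation.apply_eval_henselPoly (δ : Derivation ℤ K K) (a : Fin (d + 1) → K) (x : K) :
    δ ((henselPoly a).eval x) =
      (derivative (henselPoly a)).eval x * δ x + ∑ i, δ (a i) * x ^ (i : ℕ) := by
  rw [Derivation.apply_eval_eq]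
  simp [henselPoly, Derivation.leibniz_pow, mul_comm (_ ^ _ : K)]
  ring

noncomputable def henselRootDeriv (a b : Fin (d + 1) → K) (x : K) : K :=
  -(∑ i, b i * x ^ (i : ℕ)) / (derivative (henselPoly a)).eval x

theorem Derivation.apply_eq_henselRootDeriv (δ : Derivation ℤ K K) {a : Fin (d + 1) → K} {x : K}
    (hroot : (henselPoly a).IsRoot x) (hsimple : (derivative (henselPoly a)).eval x ≠ 0) :
    δ x = henselRootDeriv a (fun i => δ (a i)) x := by
  have h := δ.apply_eval_henselPoly a x
  rw [hroot.eq_zero, map_zero] at h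
  rw [henselRootDeriv, eq_div_iff hsimple]
  linear_combination -h

theorem henselRootDeriv_zero : henselRootDeriv (0 : Fin (d + 1) → K) 0 (-1) = 0 := by
  simp [henselRootDeriv]

variable [TopologicalSpace K] [IsTopologicalRing K] [ContinuousInv₀ K]

theorem continuousAt_henselRootDeriv :
    ContinuousAt (fun p : ((Fin (d + 1) → K) × (Fin (d + 1) → K)) × K =>
      henselRootDeriv p.1.1 p.1.2 p.2) ((0, 0), -1) := by
  have hden : Continuous fun p : ((Fin (d + 1) → K) × (Fin (d + 1) → K)) × K =>
      (derivative (henselPoly p.1.1)).eval p.2 := by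
    simp_rw [eval_derivative_henselPoly]
    fun_prop
  refine ContinuousAt.div (by fun_prop) hden.continuousAt ?_
  simp [eval_derivative_henselPoly_zero]

end HenselPoly

section HenselRoots

variable [Field K]

def HasHenselRoots (τ : TopologicalSpace K) : Prop :=
  ∀ U ∈ @nhds K τ (-1), ∀ d : ℕ, ∀ᶠ a in Filter.pi fun _ : Fin (d + 1) => @nhds K τ 0,
    ∃ x ∈ U, (henselPoly a).IsRoot x ∧ (derivative (henselPoly a)).eval x ≠ 0

theorem isGtHenselian_iff {τ : TopologicalSpace K} :
    IsGtHenselian τ ↔ IsFieldTopology τ ∧ τ ≠ ⊥ ∧ HasHenselRoots τ := by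
  simp only [HasHenselRoots, eventually_pi_self_iff]
  rfl

theorem IsFieldTopology.continuousInv₀ [t : TopologicalSpace K]
    (h : IsFieldTopology t) : ContinuousInv₀ K :=
  have := h.1
  ⟨fun _ hx => h.2.2.continuousAt (isOpen_compl_singleton.mem_nhds hx)⟩

theorem tendsto_derivations_pi_nhds_derTop [t : TopologicalSpace K] {ι : Type*}
    (I : Set (Derivation ℤ K K)) :
    Tendsto (fun a : ι → K => fun (δ : I) i => δ.1 (a i))
      (Filter.pi fun _ => @nhds K (derTop t I) 0) (𝓝 0) :=
  tendsto_pi_nhds.2 fun δ => tendsto_pi_nhds.2 fun i => by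
    simpa [Function.comp_def] using
      (tendsto_derivation_nhds_derTop δ 0).comp (tendsto_eval_pi _ i)

theorem HasHenselRoots.derTop [t : TopologicalSpace K] [IsTopologicalRing K] [ContinuousInv₀ K]
    (h : HasHenselRoots t) (I : Set (Derivation ℤ K K)) : HasHenselRoots (derTop t I) := by
  intro U hU d
  rw [_root_.derTop, nhds_induced, mem_comap] at hU
  obtain ⟨N, hN, hNU⟩ := hU
  -- at a simple root `x` of `henselPoly a`, `Φ ((a, (δ ∘ a)_δ), x)` is the image of `x` under
  -- the embedding `K → K × (I → K)` that induces `derTop t I`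
  let Φ : ((Fin (d + 1) → K) × (I → Fin (d + 1) → K)) × K → K × (I → K) :=
    fun p => (p.2, fun δ => henselRootDeriv p.1.1 (p.1.2 δ) p.2)
  have hΦ : ContinuousAt Φ ((0, 0), -1) :=
    continuousAt_snd.prodMk <| continuousAt_pi.2 fun δ =>
      continuousAt_henselRootDeriv.comp (x := ((0, 0), -1))
        (f := fun p : ((Fin (d + 1) → K) × (I → Fin (d + 1) → K)) × K => ((p.1.1, p.1.2 δ), p.2))
        (by fun_prop)
  have hΦN : Φ ⁻¹' N ∈ 𝓝 ((0, 0), -1) := hΦ.preimage_mem_nhds (by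
    simpa [Φ, henselRootDeriv_zero] using hN)
  rw [nhds_prod_eq, mem_prod_iff] at hΦN
  obtain ⟨S, hS, W, hW, hSW⟩ := hΦN
  have hpi : (Filter.pi fun _ : Fin (d + 1) => @nhds K (_root_.derTop t I) 0) ≤
      Filter.pi fun _ => 𝓝 0 :=
    Filter.pi_mono fun _ => nhds_derTop_le 0
  have hpair := (tendsto_id.mono_right (hpi.trans nhds_pi.ge)).prodMk_nhds
    (tendsto_derivations_pi_nhds_derTop I)
  filter_upwards [hpair hS, hpi (h W hW d)] with a haS ⟨x, hxW, hroot, hsimple⟩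
  refine ⟨x, hNU ?_, hroot, hsimple⟩
  have hΦx : Φ ((a, fun δ i => δ.1 (a i)), x) = (x, fun δ : I => δ.1 x) := by
    simp only [Φ, (Derivation.apply_eq_henselRootDeriv _ hroot hsimple).symm]
  simpa only [Set.mem_preimage, id, hΦx] using hSW (Set.mk_mem_prod haS hxW)

end HenselRoots

theorem stmt4_general [Field K] (τ : TopologicalSpace K)
    (hτ : IsGtHenselian τ) (I : Set (Derivation ℤ K K))
    (hnd : derTop τ I ≠ ⊥) :
    IsGtHenselian (derTop τ I) := by
  obtain ⟨hfield, -, hroots⟩ := isGtHenselian_iff.1 hτ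
  let _ := τ
  have := hfield.2.1
  have := hfield.continuousInv₀
  exact isGtHenselian_iff.2 ⟨hfield.derTop I, hnd, hroots.derTop I⟩

theorem stmt4 [Field K] [CharZero K] (τ : TopologicalSpace K)
    (hτ : IsGtHenselian τ) (I : Set (Derivation ℤ K K))
    (hnd : derTop τ I ≠ ⊥) :
    IsGtHenselian (derTop τ I) :=
  stmt4_general τ hτ I hnd
end

section
/- Let K be a field with a Hausdorff field topology τ and let d₁, …, dₙ : K → K be K-linearly independent derivations such that the intersection F = ⋂ᵢ Cons(dᵢ) of their constant subfields is τ-dense in K. Then the set {(a, d₁(a), …, dₙ(a)) : a ∈ K} is τ-dense in K^{n+1} (with the product topology). -/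
open TopologicalSpace Polynomial

variable {K : Type*}

/-!
The graph map `a ↦ (a, d₁ a, …, dₙ a)` is additive, and by the Leibniz rule it commutes with
multiplication by common constants. Hence the closure of its image is an additive subgroup stable
under multiplication by the dense subfield `F`, hence by continuity under all of `K`: it is a
`K`-subspace. Linear independence of the `dᵢ` says that no nonzero functional kills every vector
`(d₁ a, …, dₙ a)`, so these span `Kⁿ`; with `graph 1 = (1, 0)` the image spans `K × Kⁿ`, and its
closure is everything.
-/

open Submodule Set

theorem span_range_eval_eq_top_of_linearIndependent {ι X F : Type*} [Fintype ι] [Field F]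
    {f : ι → X → F} (hf : LinearIndependent F f) :
    span F (range fun x i => f i x) = ⊤ := by
  classical
  by_contra hne
  obtain ⟨φ, hφ, hker⟩ := exists_le_ker_of_lt_top _ (lt_top_iff_ne_top.mpr hne)
  set c : ι → F := fun i => φ fun j => if i = j then 1 else 0
  have hφc (v : ι → F) : φ v = ∑ i, v i • c i := LinearMap.pi_apply_eq_sum_univ φ v
  have hc : ∀ i, c i = 0 := by
    refine Fintype.linearIndependent_iff.mp hf c (funext fun x => ?_)
    have hx : φ (fun i => f i x) = 0 := hker (subset_span ⟨x, rfl⟩)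
    simpa [hφc, mul_comm] using hx
  exact hφ (LinearMap.ext fun v => by simp [hφc, hc])

theorem Submodule.eq_top_of_map_snd_eq_top {R M N : Type*} [Ring R] [AddCommGroup M]
    [AddCommGroup N] [Module R M] [Module R N] {p : Submodule R (M × N)}
    (hinl : ∀ m : M, (m, (0 : N)) ∈ p) (hsnd : p.map (LinearMap.snd R M N) = ⊤) : p = ⊤ := by
  have hker : LinearMap.ker (LinearMap.snd R M N) ≤ p := by
    rw [LinearMap.ker_snd R M N]
    rintro _ ⟨m, rfl⟩
    exact hinl m
  simpa [hsnd] using (comap_map_eq_self hker).symm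

theorem AddSubgroup.dense_of_smul_mem_of_span_eq_top {R M : Type*} [Ring R] [TopologicalSpace R]
    [AddCommGroup M] [TopologicalSpace M] [IsTopologicalAddGroup M] [Module R M]
    [ContinuousSMul R M] (A : AddSubgroup M) {C : Set R} (hC : Dense C)
    (hsmul : ∀ c ∈ C, ∀ x ∈ A, c • x ∈ A) (hspan : span R (A : Set M) = ⊤) :
    Dense (A : Set M) := by
  let P : Submodule R M :=
    { A.topologicalClosure with
      smul_mem' := fun c x hx => map_mem_closure₂ continuous_smul (hC c) hx hsmul }
  have hP : P = ⊤ := top_le_iff.mp (hspan ▸ span_le.mpr A.le_topologicalClosure)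
  rw [dense_iff_closure_eq, ← A.topologicalClosure_coe]
  exact congrArg SetLike.coe hP

namespace Derivation

variable {ι R A : Type*} [CommSemiring R] [CommRing A] [Algebra R A]

def graph (d : ι → Derivation R A A) : A →ₗ[R] A × (ι → A) :=
  LinearMap.id.prod (LinearMap.pi fun i => (d i).toLinearMap)

@[simp]
theorem graph_apply (d : ι → Derivation R A A) (a : A) : graph d a = (a, fun i => d i a) := rfl

theorem smul_graph_of_apply_eq_zero (d : ι → Derivation R A A) {c : A} (hc : ∀ i, d i c = 0)
    (a : A) : c • graph d a = graph d (c * a) := by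
  ext i <;> simp [hc]

theorem span_range_graph_eq_top {F : Type*} [Fintype ι] [Field F] [Algebra R F]
    (d : ι → Derivation R F F) (hd : LinearIndependent F fun i => ⇑(d i)) :
    span F (range (graph d)) = ⊤ := by
  refine eq_top_of_map_snd_eq_top (fun m => ?_) ?_
  · have h1 : graph d 1 ∈ span F (range (graph d)) := subset_span ⟨1, rfl⟩
    convert smul_mem _ m h1 using 1
    ext <;> simp
  · rw [map_span, ← range_comp]
    exact span_range_eval_eq_top_of_linearIndependent hd

end Derivation

theorem stmt6 [Field K] (τ : TopologicalSpace K) (hτ : IsFieldTopology τ)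
    (n : ℕ) (d : Fin n → Derivation ℤ K K)
    (hli : LinearIndependent K fun i => ⇑(d i))
    (hdense : @Dense K τ {a : K | ∀ i, d i a = 0}) :
    @Dense (K × (Fin n → K))
      (@instTopologicalSpaceProd K (Fin n → K) τ
        (@Pi.topologicalSpace (Fin n) (fun _ => K) fun _ => τ))
      (Set.range fun a : K => (a, fun i => d i a)) := by
  let _ := τ
  have _ : IsTopologicalRing K := hτ.2.1
  set G := (Derivation.graph d).range.toAddSubgroup
  have hsmul : ∀ c ∈ {a : K | ∀ i, d i a = 0}, ∀ x ∈ G, c • x ∈ G := by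
    rintro c hc _ ⟨a, rfl⟩
    exact ⟨c * a, (Derivation.smul_graph_of_apply_eq_zero d hc a).symm⟩
  exact G.dense_of_smul_mem_of_span_eq_top hdense hsmul (Derivation.span_range_graph_eq_top d hli)
end

section
/- Let K be a field with a Hausdorff field topology τ and let I be a K-linearly independent set of derivations K → K whose common constant subfield ⋂_{d ∈ I} Cons(d) is τ-dense in K. For subsets I₁, I₂ ⊆ I, the topology τ_{I₂} refines τ_{I₁} if and only if I₁ ⊆ I₂. In particular τ_{I₁} and τ_{I₂} are incomparable if and only if I₁ and I₂ are incomparable under containment. -/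
open TopologicalSpace Polynomial

variable {K : Type*}

/-! For finitely many linearly independent derivations `Dᵢ`, the vectors `(Dᵢ a)ᵢ` span `Kⁿ`.
Since `Dᵢ (c * b) = c * Dᵢ b` for a common constant `c` and the constants are dense, the closure of
the image of `a ↦ (a, (Dᵢ a)ᵢ)` is closed under multiplication by all of `K`, hence is a subspace
containing `(1, 0)` and all `(0, (Dᵢ a)ᵢ)`, i.e. everything. As basic open sets of a product
constrain only finitely many coordinates, `a ↦ (a, (d a)_{d ∈ I})` has dense image in `K × K^I`.
So if `d₀ ∈ I \ J` were `τ_J`-continuous at `0`, density would give an `a` with `a` and all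
`d a` (`d ∈ J`) close to `0` but `d₀ a` close to `1`. -/

open Set Filter Topology Submodule

theorem span_range_eval_eq_top [Field K] {X ι : Type*} [Fintype ι] {f : ι → X → K}
    (hf : LinearIndependent K f) : span K (range fun x i => f i x) = ⊤ := by
  classical
  refine dualAnnihilator_eq_bot_iff.mp (eq_bot_iff.mpr fun φ hφ => ?_)
  rw [mem_dualAnnihilator] at hφ
  have hcomb : ∑ i, φ (fun j => if i = j then 1 else 0) • f i = 0 := funext fun x => by
    have h := hφ _ (subset_span ⟨x, rfl⟩)
    rw [LinearMap.pi_apply_eq_sum_univ φ] at h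
    simpa [mul_comm] using h
  have hzero := Fintype.linearIndependent_iff.mp hf _ hcomb
  refine (mem_bot K).mpr (LinearMap.ext fun x => ?_)
  rw [LinearMap.pi_apply_eq_sum_univ φ]
  simp [hzero]

def derEmbedding {R : Type*} [CommSemiring R] [CommRing K] [Algebra R K] {ι : Type*}
    (D : ι → Derivation R K K) (a : K) : K × (ι → K) :=
  (a, fun i => D i a)

section Density

variable {R : Type*} [CommSemiring R] [Field K] [Algebra R K] {ι : Type*} (D : ι → Derivation R K K)

theorem span_range_derEmbedding_eq_top [Fintype ι]
    (hD : LinearIndependent K fun i => ⇑(D i)) : span K (range (derEmbedding D)) = ⊤ := by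
  set W := span K (range (derEmbedding D))
  have hone : ((1 : K), (0 : ι → K)) ∈ W := subset_span ⟨1, by ext <;> simp [derEmbedding]⟩
  have hsnd : ∀ v : ι → K, ((0 : K), v) ∈ W := by
    have : span K (range fun a i => D i a) ≤ W.comap (LinearMap.inr K K (ι → K)) := by
      refine span_le.mpr ?_
      rintro _ ⟨a, rfl⟩
      have h := W.sub_mem (subset_span ⟨a, rfl⟩) (W.smul_mem a hone)
      simpa [derEmbedding] using h
    intro v
    exact this (by rw [span_range_eval_eq_top hD]; trivial)
  refine eq_top_iff'.mpr fun ⟨x, v⟩ => ?_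
  simpa using W.add_mem (W.smul_mem x hone) (hsnd v)

variable [TopologicalSpace K] [ContinuousAdd K] [ContinuousMul K]

theorem span_range_derEmbedding_subset_closure (hC : Dense {a | ∀ i, D i a = 0}) :
    (span K (range (derEmbedding D)) : Set (K × (ι → K))) ⊆ closure (range (derEmbedding D)) := by
  intro x hx
  induction hx using span_induction with
  | mem x hx => exact subset_closure hx
  | zero => exact subset_closure ⟨0, by ext <;> simp [derEmbedding]⟩
  | add x y _ _ hx hy =>
    refine map_mem_closure₂ continuous_add hx hy ?_
    rintro _ ⟨a, rfl⟩ _ ⟨b, rfl⟩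
    exact ⟨a + b, by ext <;> simp [derEmbedding]⟩
  | smul k x _ hx =>
    refine map_mem_closure₂ continuous_smul (hC k) hx ?_
    rintro c hc _ ⟨b, rfl⟩
    exact ⟨c * b, by ext <;> simp [derEmbedding, Derivation.leibniz, hc _]⟩

theorem denseRange_derEmbedding_of_fintype [Fintype ι]
    (hD : LinearIndependent K fun i => ⇑(D i)) (hC : Dense {a | ∀ i, D i a = 0}) :
    DenseRange (derEmbedding D) := fun p =>
  span_range_derEmbedding_subset_closure D hC (by rw [span_range_derEmbedding_eq_top D hD]; trivial)

theorem denseRange_derEmbedding (hD : LinearIndependent K fun i => ⇑(D i))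
    (hC : Dense {a | ∀ i, D i a = 0}) : DenseRange (derEmbedding D) := by
  intro p
  rw [mem_closure_iff_nhds]
  intro t ht
  rw [nhds_prod_eq, nhds_pi, mem_prod_iff] at ht
  obtain ⟨U, hU, T, hT, hUT⟩ := ht
  obtain ⟨F, s, hs, hsT⟩ := mem_pi'.mp hT
  have hF := denseRange_derEmbedding_of_fintype (fun i : F => D i)
    (hD.comp _ Subtype.val_injective) (hC.mono fun a (ha : ∀ i, D i a = 0) i => ha i)
  obtain ⟨a, haU, has⟩ := hF.mem_nhds (x := (p.1, fun i : F => p.2 i))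
    (prod_mem_nhds hU (set_pi_mem_nhds finite_univ fun i _ => hs i))
  exact ⟨derEmbedding D a, hUT ⟨haU, hsT fun i hi => has ⟨i, hi⟩ trivial⟩, a, rfl⟩

end Density

section DerTop

variable [Field K] [τ : TopologicalSpace K]

theorem derTop_le_induced_comp {Y : Type*} [t : TopologicalSpace Y]
    {J : Set (Derivation ℤ K K)} {g : K × (J → K) → Y} (hg : Continuous g) :
    derTop τ J ≤ t.induced (g ∘ derEmbedding fun d : J => d.1) := by
  rw [← induced_compose]
  exact induced_mono (continuous_iff_le_induced.mp hg)

theorem antitone_derTop : Antitone (derTop τ) := fun _ _ h =>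
  derTop_le_induced_comp (continuous_fst.prodMk
    (continuous_pi fun d => (continuous_apply (Set.inclusion h d)).comp continuous_snd))

theorem derTop_le_induced {J : Set (Derivation ℤ K K)} {d : Derivation ℤ K K} (hd : d ∈ J) :
    derTop τ J ≤ τ.induced d :=
  derTop_le_induced_comp ((continuous_apply ⟨d, hd⟩).comp continuous_snd)

variable [T2Space K] [ContinuousAdd K] [ContinuousMul K]

theorem not_derTop_le_induced {I J : Set (Derivation ℤ K K)}
    (hli : LinearIndependent K fun d : I => ⇑(d : Derivation ℤ K K))
    (hdense : Dense {a : K | ∀ d ∈ I, d a = 0}) (hJ : J ⊆ I) {d₀ : Derivation ℤ K K}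
    (hd₀ : d₀ ∈ I) (hd₀J : d₀ ∉ J) : ¬ derTop τ J ≤ τ.induced d₀ := by
  classical
  intro hle
  have hcont : Tendsto d₀ (@nhds K (derTop τ J) 0) (𝓝 0) := by
    have h := @Continuous.tendsto K K (derTop τ J) τ d₀ (continuous_iff_le_induced.mpr hle) 0
    rwa [map_zero] at h
  obtain ⟨V, hV, W, hW, hVW⟩ := Filter.disjoint_iff.mp (disjoint_nhds_nhds.mpr (zero_ne_one' K))
  obtain ⟨N, hN, hNV⟩ : ∃ N ∈ 𝓝 (derEmbedding (fun d : J => d.1) 0),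
      derEmbedding (fun d : J => d.1) ⁻¹' N ⊆ d₀ ⁻¹' V :=
    mem_comap.mp (by rw [← nhds_induced]; exact hcont hV)
  let restrict : K × (I → K) → (K × (J → K)) × K :=
    fun p => ((p.1, fun d => p.2 (Set.inclusion hJ d)), p.2 ⟨d₀, hd₀⟩)
  have hrestrict : Continuous restrict := by fun_prop
  have htarget : restrict (0, Pi.single ⟨d₀, hd₀⟩ 1) = (derEmbedding (fun d : J => d.1) 0, 1) := by
    refine Prod.ext (Prod.ext rfl (funext fun d => ?_)) (Pi.single_eq_same _ _)
    have hne : Set.inclusion hJ d ≠ ⟨d₀, hd₀⟩ := by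
      rintro ⟨⟩
      exact hd₀J d.2
    simp [restrict, derEmbedding, Pi.single_eq_of_ne hne]
  have hdense' : Dense {a : K | ∀ d : I, d.1 a = 0} :=
    hdense.mono fun a (ha : ∀ d ∈ I, d a = 0) d => ha d.1 d.2
  obtain ⟨a, ha⟩ := (denseRange_derEmbedding _ hli hdense').mem_nhds
    (hrestrict.continuousAt.preimage_mem_nhds (htarget ▸ prod_mem_nhds hN hW))
  exact Set.disjoint_left.mp hVW (hNV ha.1) ha.2

theorem derTop_le_derTop_iff {I I₁ I₂ : Set (Derivation ℤ K K)}
    (hli : LinearIndependent K fun d : I => ⇑(d : Derivation ℤ K K))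
    (hdense : Dense {a : K | ∀ d ∈ I, d a = 0}) (h₁ : I₁ ⊆ I) (h₂ : I₂ ⊆ I) :
    derTop τ I₂ ≤ derTop τ I₁ ↔ I₁ ⊆ I₂ := by
  refine ⟨fun hle d hd => ?_, fun h => antitone_derTop h⟩
  by_contra hd₂
  exact not_derTop_le_induced hli hdense h₂ (h₁ hd) hd₂ (hle.trans (derTop_le_induced hd))

end DerTop

theorem stmt7 [Field K] (τ : TopologicalSpace K) (hτ : IsFieldTopology τ)
    (I : Set (Derivation ℤ K K))
    (hli : LinearIndependent K fun d : I => ⇑(d : Derivation ℤ K K))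
    (hdense : @Dense K τ {a : K | ∀ d ∈ I, d a = 0})
    (I₁ I₂ : Set (Derivation ℤ K K)) (h₁ : I₁ ⊆ I) (h₂ : I₂ ⊆ I) :
    (derTop τ I₂ ≤ derTop τ I₁ ↔ I₁ ⊆ I₂) ∧
      ((¬ derTop τ I₂ ≤ derTop τ I₁ ∧ ¬ derTop τ I₁ ≤ derTop τ I₂) ↔
        (¬ I₁ ⊆ I₂ ∧ ¬ I₂ ⊆ I₁)) := by
  let _ := τ
  obtain ⟨_, _, -⟩ := hτ
  rw [derTop_le_derTop_iff hli hdense h₁ h₂, derTop_le_derTop_iff hli hdense h₂ h₁]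
  exact ⟨Iff.rfl, Iff.rfl⟩
end

section
/- Let K be a field with a Hausdorff field topology τ, and suppose U is a nonempty bounded open subset of K. Then the collection {aU + b : a ∈ K×, b ∈ K} is a basis for τ. -/
/-!
Affine maps `x ↦ a x + b` with `a ≠ 0` are homeomorphisms, so the sets `aU + b` are open.
For a neighbourhood `V` of `x` and a point `u₀ ∈ U`, boundedness of `U - U` gives `l ≠ 0` with
`x + l(U - U) ⊆ V`, so `lU + (x - l u₀)` is a basic set containing `x` inside `V`.
-/

open TopologicalSpace Polynomial

variable {K : Type*}

open Topology Pointwise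

theorem IsOpen.image_mul_add [Field K] [TopologicalSpace K] [ContinuousMul K] [ContinuousAdd K]
    {U : Set K} (hU : IsOpen U) {a : K} (ha : a ≠ 0) (b : K) :
    IsOpen ((fun x => a * x + b) '' U) :=
  ((Homeomorph.mulLeft₀ a ha).trans (Homeomorph.addRight b)).isOpenMap U hU

theorem IsBddSet.sub_self [Field K] [TopologicalSpace K] [IsTopologicalAddGroup K] {s : Set K}
    (hs : IsBddSet ‹_› s) : IsBddSet ‹_› (s - s) := by
  intro V hV
  obtain ⟨W, hW, hWV⟩ := exists_nhds_half_neg hV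
  obtain ⟨l, hl, hlW⟩ := hs W hW
  refine ⟨l, hl, ?_⟩
  rintro _ ⟨x, hx, y, hy, rfl⟩
  rw [mul_sub]
  exact hWV _ (hlW x hx) _ (hlW y hy)

theorem stmt10 [Field K] (τ : TopologicalSpace K) (hτ : IsFieldTopology τ)
    (U : Set K) (hUo : @IsOpen K τ U) (hUne : U.Nonempty) (hUb : IsBddSet τ U) :
    @TopologicalSpace.IsTopologicalBasis K τ
      {S : Set K | ∃ a b : K, a ≠ 0 ∧ S = (fun x => a * x + b) '' U} := by
  let _ := τ
  have : IsTopologicalRing K := hτ.2.1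
  refine isTopologicalBasis_of_isOpen_of_nhds ?_ fun x V hxV hVo => ?_
  · rintro S ⟨a, b, ha, rfl⟩
    exact hUo.image_mul_add ha b
  obtain ⟨u₀, hu₀⟩ := hUne
  have hV : (x + ·) ⁻¹' V ∈ 𝓝 0 :=
    (continuous_const_add x).continuousAt.preimage_mem_nhds (by simpa using hVo.mem_nhds hxV)
  obtain ⟨l, hl, hlV⟩ := hUb.sub_self _ hV
  refine ⟨(fun y => l * y + (x - l * u₀)) '' U, ⟨l, _, hl, rfl⟩, ⟨u₀, hu₀, by ring⟩, ?_⟩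
  rintro _ ⟨u, hu, rfl⟩
  have hmem : x + l * (u - u₀) ∈ V := hlV (u - u₀) (Set.sub_mem_sub hu hu₀)
  convert hmem using 1
  ring
end

section
/- Let K be a field, F a subfield of K of characteristic zero, B a transcendence basis for K over F, d₀ : F → K a derivation, and g : B → K an arbitrary function. Then there is a unique derivation d : K → K extending d₀ and with d(b) = g(b) for all b ∈ B. -/
/-!
A derivation `A → M` is the same thing as a ring hom `A → K ⊕ M` into the trivial square-zero
extension whose first component is the structure map. On `F(B) ≅ Frac F[B]` such a hom can be
prescribed freely: `d₀` on the coefficients and `g` on the variables, nonzero polynomials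
becoming units since their first component `p(B)` is nonzero. In characteristic zero `K/F(B)` is
separable algebraic, hence formally étale. Formal smoothness lifts the hom from `F(B)` to `K`,
and formal unramifiedness (`Ω[K/F(B)] = 0`) kills every derivation vanishing on `F(B)`, which
gives uniqueness.
-/

namespace Derivation

open TrivSqZeroExt

section TrivSqZeroExt

variable {A K M : Type*} [CommRing A] [CommRing K] [Algebra A K] [AddCommGroup M] [Module K M]
  [Module Kᵐᵒᵖ M] [IsCentralScalar K M] [Module A M] [IsScalarTower A K M]

def toRingHomTrivSqZeroExt (D : Derivation ℤ A M) : A →+* TrivSqZeroExt K M where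
  toFun a := inl (algebraMap A K a) + inr (D a)
  map_one' := by ext <;> simp
  map_mul' a b := by ext <;> simp [D.leibniz, add_comm]
  map_zero' := by ext <;> simp
  map_add' a b := by ext <;> simp [add_add_add_comm]

@[simp] lemma fst_toRingHomTrivSqZeroExt (D : Derivation ℤ A M) (a : A) :
    (D.toRingHomTrivSqZeroExt (K := K) a).fst = algebraMap A K a := by
  simp [toRingHomTrivSqZeroExt]

@[simp] lemma snd_toRingHomTrivSqZeroExt (D : Derivation ℤ A M) (a : A) :
    (D.toRingHomTrivSqZeroExt (K := K) a).snd = D a := by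
  simp [toRingHomTrivSqZeroExt]

def ofRingHomTrivSqZeroExt (φ : A →+* TrivSqZeroExt K M)
    (hφ : ∀ a, (φ a).fst = algebraMap A K a) : Derivation ℤ A M :=
  Derivation.mk' ((sndHom K M).toAddMonoidHom.comp φ.toAddMonoidHom).toIntLinearMap
    fun a b => by simp [hφ, add_comm]

@[simp] lemma ofRingHomTrivSqZeroExt_apply (φ : A →+* TrivSqZeroExt K M)
    (hφ : ∀ a, (φ a).fst = algebraMap A K a) (a : A) :
    ofRingHomTrivSqZeroExt φ hφ a = (φ a).snd := rfl

end TrivSqZeroExt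

section Field

variable {K M : Type*} [Field K] [AddCommGroup M] [Module K M]

theorem eqOn_subfield_closure {R : Type*} [CommRing R] [Algebra R K] [Module R M]
    {D₁ D₂ : Derivation R K M} {s : Set K} (h : Set.EqOn D₁ D₂ s) :
    Set.EqOn D₁ D₂ (Subfield.closure s) := fun x hx => by
  induction hx using Subfield.closure_induction with
  | mem x hx => exact h hx
  | one => simp
  | add x y _ _ hx hy => simp only [map_add, hx, hy]
  | neg x _ hx => simp only [map_neg, hx]
  | inv x _ hx => simp only [leibniz_inv, hx]
  | mul x y _ _ hx hy => simp only [leibniz, hx, hy]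

theorem ext_of_formallyUnramified (L : Type*) [CommRing L] [Algebra L K] [Module L M]
    [IsScalarTower L K M] [Algebra.FormallyUnramified L K] {D₁ D₂ : Derivation ℤ K M}
    (h : ∀ l, D₁ (algebraMap L K l) = D₂ (algebraMap L K l)) : D₁ = D₂ := by
  let E : Derivation L K M := Derivation.mk'
    { toFun x := D₁ x - D₂ x
      map_add' x y := by simp only [map_add]; abel
      map_smul' l x := by
        simp only [Algebra.smul_def, leibniz, h, RingHom.id_apply, smul_sub, algebraMap_smul]
        abel }
    fun x y => by simp only [LinearMap.coe_mk, AddHom.coe_mk, leibniz, smul_sub]; abel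
  have : Subsingleton (Derivation L K M) :=
    (KaehlerDifferential.linearMapEquivDerivation L K).symm.injective.subsingleton
  have hE : E = 0 := Subsingleton.elim _ _
  ext x
  simpa [E, sub_eq_zero] using congr($hE x)

end Field

theorem exists_extension_of_formallySmooth {L K : Type*} [CommRing L] [CommRing K]
    [Algebra L K] [Algebra.FormallySmooth L K] (D : Derivation ℤ L K) :
    ∃ D' : Derivation ℤ K K, ∀ l, D' (algebraMap L K l) = D l := by
  let : Algebra L (TrivSqZeroExt K K) := (D.toRingHomTrivSqZeroExt (K := K)).toAlgebra
  let fst' : TrivSqZeroExt K K →ₐ[L] K :=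
    { toRingHom := (fstHom K K K).toRingHom
      commutes' := D.fst_toRingHomTrivSqZeroExt }
  have hsurj : Function.Surjective fst' := fun x => ⟨inl x, fst_inl K x⟩
  have hker : IsNilpotent (RingHom.ker fst') := ⟨2, kerIdeal_sq K K⟩
  let Φ := Algebra.FormallySmooth.liftOfSurjective (AlgHom.id L K) fst' hsurj hker
  have hΦ (x : K) : (Φ.toRingHom x).fst = algebraMap K K x :=
    Algebra.FormallySmooth.liftOfSurjective_apply _ fst' hsurj hker x
  refine ⟨ofRingHomTrivSqZeroExt Φ.toRingHom hΦ, fun l => ?_⟩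
  rw [ofRingHomTrivSqZeroExt_apply]
  exact congr(($(Φ.commutes l)).snd).trans (D.snd_toRingHomTrivSqZeroExt l)

end Derivation

open TrivSqZeroExt Derivation in
theorem AlgebraicIndependent.exists_derivation_adjoin {ι F K : Type*} [Field F] [Field K]
    [Algebra F K] {x : ι → K} (hx : AlgebraicIndependent F x) (D₀ : Derivation ℤ F K)
    (v : ι → K) :
    ∃ D : Derivation ℤ (IntermediateField.adjoin F (Set.range x)) K,
      (∀ a, D (algebraMap F _ a) = D₀ a) ∧
      ∀ i, D ⟨x i, IntermediateField.subset_adjoin F _ (Set.mem_range_self i)⟩ = v i := by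
  have hinj := algebraicIndependent_iff_injective_aeval.1 hx
  let φ : MvPolynomial ι F →+* TrivSqZeroExt K K :=
    MvPolynomial.eval₂Hom D₀.toRingHomTrivSqZeroExt fun i => inl (x i) + inr (v i)
  have hφ (p : MvPolynomial ι F) : (φ p).fst = MvPolynomial.aeval x p := by
    induction p using MvPolynomial.induction_on <;> simp_all [φ]
  have hunit (p : nonZeroDivisors (MvPolynomial ι F)) : IsUnit (φ p) := by
    rw [isUnit_iff_isUnit_fst, isUnit_iff_ne_zero, hφ, ← map_zero (MvPolynomial.aeval (R := F) x)]
    exact hinj.ne (nonZeroDivisors.ne_zero p.2)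
  let lift := IsLocalization.lift hunit (S := FractionRing (MvPolynomial ι F))
  have hlift : (fstHom K K K).toRingHom.comp lift = IsFractionRing.lift hinj := by
    refine IsLocalization.ringHom_ext (nonZeroDivisors (MvPolynomial ι F)) (RingHom.ext fun p => ?_)
    simp [lift, IsLocalization.lift_eq, hφ]
  let ψ := lift.comp hx.reprField.toRingHom
  have hψ (z) : (ψ z).fst = (z : K) :=
    congr($hlift (hx.reprField z)).trans (hx.lift_reprField z)
  refine ⟨ofRingHomTrivSqZeroExt ψ hψ, fun a => ?_, fun i => ?_⟩
  · show (lift (hx.reprField (algebraMap F _ a))).snd = D₀ a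
    rw [AlgHom.commutes, IsScalarTower.algebraMap_apply F (MvPolynomial ι F),
      IsLocalization.lift_eq]
    simp [φ]
  · have hX : hx.reprField ⟨x i, IntermediateField.subset_adjoin F _ (Set.mem_range_self i)⟩ =
        algebraMap (MvPolynomial ι F) _ (MvPolynomial.X i) :=
      hx.aevalEquivField.symm_apply_eq.2 (Subtype.ext (by simp))
    show (lift (hx.reprField _)).snd = v i
    rw [hX, IsLocalization.lift_eq]
    simp [φ]

variable {K : Type*}

theorem stmt14 [Field K] [CharZero K] (F : Subfield K) (B : Set K)
    (hB : IsTranscendenceBasis F (Subtype.val : B → K))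
    (d₀ : Derivation ℤ F K) (g : B → K) :
    ∃! d : Derivation ℤ K K, (∀ a : F, d (a : K) = d₀ a) ∧ ∀ b : B, d (b : K) = g b := by
  let L := IntermediateField.adjoin F (Set.range (Subtype.val : B → K))
  have : Algebra.IsAlgebraic L K := hB.isAlgebraic_field
  have : Algebra.FormallyEtale L K := .of_isSeparable L K
  obtain ⟨D, hDF, hDB⟩ := hB.1.exists_derivation_adjoin d₀ g
  obtain ⟨d, hd⟩ := D.exists_extension_of_formallySmooth
  refine ⟨d, ⟨fun a => (hd _).trans (hDF a), fun b => (hd _).trans (hDB b)⟩, ?_⟩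
  rintro d' ⟨hd'F, hd'B⟩
  refine Derivation.ext_of_formallyUnramified L fun l => Derivation.eqOn_subfield_closure ?_ l.2
  rintro _ (⟨a, rfl⟩ | ⟨b, rfl⟩)
  · exact (hd'F a).trans ((hd _).trans (hDF a)).symm
  · exact (hd'B b).trans ((hd _).trans (hDB b)).symm
end

section
/- Let K be a field of characteristic zero and infinite transcendence degree, with a Hausdorff field topology τ of weight at most κ = |K|, such that there exist disjoint τ-dense algebraically independent sets of size κ. Then there exists a K-linearly independent family D of 2^κ derivations K → K such that the intersection of the constant subfields of the members of D is τ-dense in K. -/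
open TopologicalSpace Polynomial

variable {K : Type*}

/-!
Extend `B ∪ B'` to a transcendence basis `S` of `K`. The field `K` is formally étale over
`ℤ[S]` (a localization followed by a separable algebraic extension), so every assignment of
values on `S` extends to a derivation of `K`. Hence the derivations vanishing on `B` map
`K`-linearly onto `B' → K`, a space of dimension `2 ^ #K`, and a linearly independent family
of that size among them has the dense set `B` among its common constants.
-/

-- Formal étaleness identifies `B ⊗[A] Ω[A⁄R]` with `Ω[B⁄R]`.
open KaehlerDifferential in
theorem Derivation.exists_comp_algebraMap_eq_of_formallyEtale {R A B M : Type*} [CommRing R]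
    [CommRing A] [CommRing B] [Algebra R A] [Algebra R B] [Algebra A B] [IsScalarTower R A B]
    [Algebra.FormallyEtale A B] [AddCommGroup M] [Module R M] [Module A M] [Module B M]
    [IsScalarTower A B M] [IsScalarTower R B M] (d : Derivation R A M) :
    ∃ d' : Derivation R B M, ∀ a, d' (algebraMap A B a) = d a := by
  have : IsScalarTower R A M := .of_algebraMap_smul fun r m => by
    rw [← algebraMap_smul B, ← IsScalarTower.algebraMap_apply, algebraMap_smul]
  refine ⟨((d.liftKaehlerDifferential.liftBaseChange B).comp
    (tensorKaehlerEquivOfFormallyEtale R A B).symm.toLinearMap).compDer (D R B), fun a => ?_⟩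
  simp [tensorKaehlerEquivOfFormallyEtale_symm_D_algebraMap]

theorem IsTranscendenceBasis.exists_derivation_eq {ι : Type*} [Field K] [CharZero K]
    {x : ι → K} (hx : IsTranscendenceBasis ℤ x) (f : ι → K) :
    ∃ d : Derivation ℤ K K, ∀ i, d (x i) = f i := by
  let P := MvPolynomial ι ℤ
  let L := FractionRing P
  let _ : Algebra P K := (MvPolynomial.aeval x).toAlgebra
  let _ : Algebra L K :=
    (IsFractionRing.lift (algebraicIndependent_iff_injective_aeval.1 hx.1)).toAlgebra
  have : IsScalarTower P L K := .of_algebraMap_eq fun p => (IsFractionRing.lift_algebraMap _ p).symm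
  have : CharZero L := (algebraMap L K).charZero
  -- The `ℤ`-action on `FractionRing P` is not reducibly `zsmul`, so the tower `ℤ → L → K`
  -- has to be supplied by hand.
  have : Algebra.IsAlgebraic L K := (@IsTranscendenceBasis.isAlgebraic_iff ℤ L K _ _ _ _ _ _
      (.of_algebraMap_eq' (RingHom.ext_int _ _)) _ _ _ _ hx).2 fun i => by
    have hxi : x i = algebraMap L K (algebraMap P L (MvPolynomial.X i)) := by
      rw [← IsScalarTower.algebraMap_apply]; exact (MvPolynomial.aeval_X x i).symm
    rw [hxi]; exact isAlgebraic_algebraMap _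
  have : Algebra.FormallyEtale L K := .of_isSeparable L K
  have : Algebra.FormallyEtale P L := .of_isLocalization (nonZeroDivisors P)
  have : Algebra.FormallyEtale P K := .comp P L K
  obtain ⟨d, hd⟩ :=
    (MvPolynomial.mkDerivation ℤ f).exists_comp_algebraMap_eq_of_formallyEtale (B := K)
  exact ⟨d, fun i => by simpa [RingHom.algebraMap_toAlgebra] using hd (MvPolynomial.X i)⟩

namespace Derivation

variable {R A M : Type*} [CommSemiring R] [CommSemiring A] [AddCommMonoid M] [Algebra R A]
  [Module A M] [Module R M] [IsScalarTower R A M]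

def coeFnLinearMap : Derivation R A M →ₗ[A] A → M where
  toFun := (⇑)
  map_add' := coe_add
  map_smul' := coe_smul

def restrictₗ (s : Set A) : Derivation R A M →ₗ[A] s → M :=
  LinearMap.funLeft A M ((↑) : s → A) ∘ₗ coeFnLinearMap

@[simp]
theorem restrictₗ_apply (s : Set A) (d : Derivation R A M) (a : s) : restrictₗ s d a = d a :=
  rfl

end Derivation

open Cardinal Derivation

universe u in
theorem rank_fun_eq_two_pow {F ι : Type u} [Field F] [Infinite F] (h : #ι = #F) :
    Module.rank F (ι → F) = 2 ^ #F := by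
  have : Infinite ι := infinite_iff.2 (h ▸ aleph0_le_mk F)
  rw [rank_fun_infinite, ← power_def, h, power_self_eq (aleph0_le_mk F)]

theorem IsTranscendenceBasis.surjective_restrictₗ_ker_restrictₗ [Field K] [CharZero K]
    {S B B' : Set K} (hS : IsTranscendenceBasis ℤ ((↑) : S → K)) (hB : B ⊆ S) (hB' : B' ⊆ S)
    (hBB' : Disjoint B B') :
    Function.Surjective
      (restrictₗ B' ∘ₗ (LinearMap.ker (restrictₗ (R := ℤ) (M := K) B)).subtype) := by
  classical
  intro g
  obtain ⟨d, hd⟩ :=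
    hS.exists_derivation_eq fun s => if h : (s : K) ∈ B' then g ⟨s, h⟩ else 0
  refine ⟨⟨d, funext fun b => ?_⟩, funext fun b => ?_⟩
  · simpa [Set.disjoint_left.1 hBB' b.2] using hd ⟨b, hB b.2⟩
  · simpa using hd ⟨b, hB' b.2⟩

theorem stmt16_general [Field K] [CharZero K] (τ : TopologicalSpace K)
    (hBB : ∃ B B' : Set K, Disjoint B B' ∧ @Dense K τ B ∧ @Dense K τ B' ∧
      AlgebraicIndependent ℤ (Subtype.val : ↑(B ∪ B') → K) ∧
      Cardinal.mk B = Cardinal.mk K ∧ Cardinal.mk B' = Cardinal.mk K) :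
    ∃ D : Set (Derivation ℤ K K), Cardinal.mk D = 2 ^ Cardinal.mk K ∧
      LinearIndependent K (fun d : D => ⇑(d : Derivation ℤ K K)) ∧
      @Dense K τ {a : K | ∀ d ∈ D, d a = 0} := by
  obtain ⟨B, B', hBB', hB, -, hind, -, hB'⟩ := hBB
  obtain ⟨S, hS, hSbasis⟩ := exists_isTranscendenceBasis_superset hind
  set W := LinearMap.ker (restrictₗ (R := ℤ) (M := K) B)
  have hrank : 2 ^ #K ≤ Module.rank K W := rank_fun_eq_two_pow hB' ▸
    LinearMap.rank_le_of_surjective _ (hSbasis.surjective_restrictₗ_ker_restrictₗ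
      (Set.subset_union_left.trans hS) (Set.subset_union_right.trans hS) hBB')
  have : Module.Free K W := .of_divisionRing K W
  obtain ⟨s, hs, hsind⟩ := le_rank_iff_exists_linearIndependent.1 hrank
  have hinj : Function.Injective (coeFnLinearMap ∘ₗ W.subtype) :=
    Derivation.coe_injective.comp Subtype.val_injective
  refine ⟨Subtype.val '' s, ?_, ?_, hB.mono ?_⟩
  · rw [mk_image_eq Subtype.val_injective, hs]
  · exact LinearIndepOn.image_of_comp _ _
      (hsind.map_injOn (coeFnLinearMap ∘ₗ W.subtype) hinj.injOn)
  · rintro b hb _ ⟨d, -, rfl⟩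
    exact congr_fun d.2 ⟨b, hb⟩

theorem stmt16 [Field K] [CharZero K] (τ : TopologicalSpace K) (hτ : IsFieldTopology τ)
    (hw : ∃ Bas : Set (Set K), @TopologicalSpace.IsTopologicalBasis K τ Bas ∧
      Cardinal.mk Bas ≤ Cardinal.mk K)
    (htr : ∃ s : Set K, s.Infinite ∧ AlgebraicIndependent ℤ (Subtype.val : s → K))
    (hBB : ∃ B B' : Set K, Disjoint B B' ∧ @Dense K τ B ∧ @Dense K τ B' ∧
      AlgebraicIndependent ℤ (Subtype.val : ↑(B ∪ B') → K) ∧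
      Cardinal.mk B = Cardinal.mk K ∧ Cardinal.mk B' = Cardinal.mk K) :
    ∃ D : Set (Derivation ℤ K K), Cardinal.mk D = 2 ^ Cardinal.mk K ∧
      LinearIndependent K (fun d : D => ⇑(d : Derivation ℤ K K)) ∧
      @Dense K τ {a : K | ∀ d ∈ D, d a = 0} :=
  stmt16_general τ hBB
end
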